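/- Let q ∈ L¹[0,1] be real-valued and let λ₀ be the first eigenvalue of the Neumann problem -y'' + qy = λy on [0,1], y'(0) = y'(1) = 0. If λ₀ ≥ ∫₀¹ q(x) dx, then q(x) = ∫₀¹ q(s) ds almost everywhere; in particular λ₀ = ∫₀¹ q dx with constant eigenfunction y = 1. -/

import Mathlib

open MeasureTheory intervalIntegral Complex

/-- The (real-valued) Rayleigh quotient of `y` for the operator `-y'' + q y` on `[0,1]`. -/
noncomputable def rayleighQuotientR (q : ℝ → ℝ) (y : ℝ → ℂ) : ℝ :=
  (∫ x in (0:ℝ)..1,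
      ((-(starRingEnd ℂ) (y x) * deriv (deriv y) x).re + q x * ‖y x‖^2)) /
  (∫ x in (0:ℝ)..1, ‖y x‖^2)

/-- Neumann boundary conditions on `[0,1]`. -/
def NeumannBC (y : ℝ → ℂ) : Prop := deriv y 0 = 0 ∧ deriv y 1 = 0

/-- `y` is a Neumann eigenfunction with eigenvalue `lam`. -/
def IsNeumannEigenfunction (q : ℝ → ℝ) (lam : ℝ) (y : ℝ → ℂ) : Prop :=
  ContDiff ℝ 2 y ∧ (∃ x ∈ Set.Icc (0:ℝ) 1, y x ≠ 0) ∧ NeumannBC y ∧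
  ∀ᵐ x, x ∈ Set.Icc (0:ℝ) 1 → -deriv (deriv y) x + (q x : ℂ) * y x = (lam : ℂ) * y x

/-- `lam` is a Neumann eigenvalue. -/
def IsNeumannEigenvalue (q : ℝ → ℝ) (lam : ℝ) : Prop := ∃ y, IsNeumannEigenfunction q lam y

/-- `lam0` is the smallest Neumann eigenvalue. -/
def IsFirstNeumannEigenvalue (q : ℝ → ℝ) (lam0 : ℝ) : Prop :=
  IsNeumannEigenvalue q lam0 ∧ ∀ lam, IsNeumannEigenvalue q lam → lam0 ≤ lam

/-!
Testing the variational principle with `y = 1` gives `λ₀ ≤ ∫₀¹ q`, hence `λ₀ = ∫₀¹ q`.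
For smooth `φ` with `φ'(0) = φ'(1) = 0` the test functions `1 + tφ` are admissible, and since
`∫₀¹ (q - λ₀) = 0` and `∫₀¹ φ'' = 0`, the excess of their Rayleigh numerator over `λ₀` times
their denominator is the quadratic `2 A t + C t²` with `A = ∫₀¹ (q - λ₀) φ`. It is nonnegative
for small `t`, so by Fermat's theorem `A = 0`. Letting `φ` range over test functions supported
in `(0,1)`, the fundamental lemma of the calculus of variations gives `q = λ₀` a.e.
-/

open Filter Topology Set
open scoped ContDiff

theorem deriv_ofReal_comp (g : ℝ → ℝ) :
    deriv (fun x => (g x : ℂ)) = fun x => ((deriv g x : ℝ) : ℂ) := by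
  funext x
  by_cases hg : DifferentiableAt ℝ g x
  · exact hg.hasDerivAt.ofReal_comp.deriv
  · have hg' : ¬ DifferentiableAt ℝ (fun x => (g x : ℂ)) x := fun h =>
      hg (by simpa [Function.comp_def] using reCLM.differentiableAt.comp x h)
    rw [deriv_zero_of_not_differentiableAt hg', deriv_zero_of_not_differentiableAt hg, ofReal_zero]

theorem rayleighQuotientR_ofReal (q g : ℝ → ℝ) :
    rayleighQuotientR q (fun x => (g x : ℂ)) =
      (∫ x in (0:ℝ)..1, (-g x * deriv (deriv g) x + q x * g x ^ 2)) /
        ∫ x in (0:ℝ)..1, g x ^ 2 := by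
  simp only [rayleighQuotientR, deriv_ofReal_comp, conj_ofReal, norm_real, Real.norm_eq_abs,
    sq_abs, ← ofReal_neg, ← ofReal_mul, ofReal_re]

theorem rayleighQuotientR_one (q : ℝ → ℝ) :
    rayleighQuotientR q (fun _ => 1) = ∫ x in (0:ℝ)..1, q x := by
  simpa using rayleighQuotientR_ofReal q 1

theorem isNeumannEigenfunction_one {q : ℝ → ℝ} {c : ℝ}
    (hq : ∀ᵐ x, x ∈ Icc (0:ℝ) 1 → q x = c) :
    IsNeumannEigenfunction q c (fun _ => 1) := by
  refine ⟨contDiff_const, ⟨0, by norm_num, one_ne_zero⟩, by simp [NeumannBC], ?_⟩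
  filter_upwards [hq] with x hx hxI
  simp [hx hxI]

theorem eq_zero_of_eventually_nonneg_mul_add_mul_sq {b c : ℝ}
    (h : ∀ᶠ t in 𝓝 0, 0 ≤ b * t + c * t ^ 2) : b = 0 := by
  have hmin : IsLocalMin (fun t => b * t + c * t ^ 2) 0 := by
    filter_upwards [h] with t ht
    simpa using ht
  have hderiv : HasDerivAt (fun t => b * t + c * t ^ 2) b 0 := by
    simpa using ((hasDerivAt_id' (0:ℝ)).const_mul b).fun_add ((hasDerivAt_pow 2 (0:ℝ)).const_mul c)
  exact hmin.hasDerivAt_eq_zero hderiv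

theorem intervalIntegral_add_mul_add_sq_mul {f g h : ℝ → ℝ} {a b : ℝ}
    (hf : IntervalIntegrable f volume a b) (hg : IntervalIntegrable g volume a b)
    (hh : IntervalIntegrable h volume a b) (t : ℝ) :
    ∫ x in a..b, (f x + t * g x + t ^ 2 * h x) =
      (∫ x in a..b, f x) + t * (∫ x in a..b, g x) + t ^ 2 * ∫ x in a..b, h x := by
  rw [integral_add (hf.add (hg.const_mul t)) (hh.const_mul _), integral_add hf (hg.const_mul t),
    intervalIntegral.integral_const_mul, intervalIntegral.integral_const_mul]

def IsNeumannRayleighLowerBound (q : ℝ → ℝ) (lam : ℝ) : Prop :=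
  ∀ y : ℝ → ℂ, ContDiff ℝ 2 y → (∃ x ∈ Icc (0:ℝ) 1, y x ≠ 0) → NeumannBC y →
    lam ≤ rayleighQuotientR q y

noncomputable def rayleighExcess (q : ℝ → ℝ) (lam : ℝ) (g : ℝ → ℝ) : ℝ :=
  (∫ x in (0:ℝ)..1, (-g x * deriv (deriv g) x + q x * g x ^ 2)) - lam * ∫ x in (0:ℝ)..1, g x ^ 2

theorem IsNeumannRayleighLowerBound.rayleighExcess_nonneg {q : ℝ → ℝ} {lam : ℝ}
    (h : IsNeumannRayleighLowerBound q lam) {g : ℝ → ℝ} (hg : ContDiff ℝ 2 g)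
    (hg0 : deriv g 0 = 0) (hg1 : deriv g 1 = 0) (hpos : 0 < ∫ x in (0:ℝ)..1, g x ^ 2) :
    0 ≤ rayleighExcess q lam g := by
  have hne : ∃ x ∈ Icc (0:ℝ) 1, (g x : ℂ) ≠ 0 := by
    by_contra! hzero
    refine hpos.ne' ((integral_congr fun x hx => ?_).trans integral_zero)
    rw [uIcc_of_le zero_le_one] at hx
    simp [ofReal_eq_zero.mp (hzero x hx)]
  have hrq := h (fun x => (g x : ℂ)) (ofRealCLM.contDiff.comp hg) hne
    (by simp only [NeumannBC, deriv_ofReal_comp, hg0, hg1, ofReal_zero, and_self])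
  rw [rayleighQuotientR_ofReal, le_div_iff₀ hpos] at hrq
  exact sub_nonneg.mpr hrq

theorem rayleighExcess_one_add_mul {q : ℝ → ℝ} {lam : ℝ} (hq : IntervalIntegrable q volume 0 1)
    (hmean : ∫ x in (0:ℝ)..1, q x = lam) {φ : ℝ → ℝ} (hφ : ContDiff ℝ 2 φ)
    (hφ0 : deriv φ 0 = 0) (hφ1 : deriv φ 1 = 0) (t : ℝ) :
    rayleighExcess q lam (fun x => 1 + t * φ x) =
      2 * (∫ x in (0:ℝ)..1, (q x - lam) * φ x) * t +
        (∫ x in (0:ℝ)..1, ((q x - lam) * φ x ^ 2 - φ x * deriv (deriv φ) x)) * t ^ 2 := by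
  have hφc : Continuous φ := hφ.continuous
  have hφ' : ContDiff ℝ 1 (deriv φ) := hφ.deriv'
  have hφ'' : Continuous (deriv (deriv φ)) := hφ'.continuous_deriv_one
  have hr : IntervalIntegrable (fun x => q x - lam) volume 0 1 := hq.sub intervalIntegrable_const
  have hrφ : IntervalIntegrable (fun x => (q x - lam) * φ x) volume 0 1 :=
    hr.mul_continuousOn hφc.continuousOn
  have hr0 : ∫ x in (0:ℝ)..1, (q x - lam) = 0 := by
    rw [integral_sub hq intervalIntegrable_const, hmean]; simp
  have hφ''0 : ∫ x in (0:ℝ)..1, deriv (deriv φ) x = 0 := by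
    rw [integral_deriv_eq_sub (fun x _ => hφ'.differentiable one_ne_zero x)
      (hφ''.intervalIntegrable 0 1), hφ0, hφ1, sub_self]
  have hN : IntervalIntegrable (fun x => -(1 + t * φ x) * (t * deriv (deriv φ) x)
      + q x * (1 + t * φ x) ^ 2) volume 0 1 :=
    (Continuous.intervalIntegrable (by fun_prop) 0 1).add
      (hq.mul_continuousOn (Continuous.continuousOn (by fun_prop)))
  have hD : IntervalIntegrable (fun x => lam * (1 + t * φ x) ^ 2) volume 0 1 :=
    Continuous.intervalIntegrable (by fun_prop) 0 1
  have hC : IntervalIntegrable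
      (fun x => (q x - lam) * φ x ^ 2 - φ x * deriv (deriv φ) x) volume 0 1 :=
    (hr.mul_continuousOn (Continuous.continuousOn (by fun_prop))).sub
      (Continuous.intervalIntegrable (by fun_prop) 0 1)
  simp only [rayleighExcess, deriv_const_add', deriv_const_mul_field']
  rw [← intervalIntegral.integral_const_mul, ← integral_sub hN hD]
  calc _ = ∫ x in (0:ℝ)..1, ((q x - lam) + t * (2 * ((q x - lam) * φ x) - deriv (deriv φ) x)
        + t ^ 2 * ((q x - lam) * φ x ^ 2 - φ x * deriv (deriv φ) x)) :=
        integral_congr fun x _ => by ring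
    _ = _ := by
        rw [intervalIntegral_add_mul_add_sq_mul hr
          ((hrφ.const_mul 2).sub (hφ''.intervalIntegrable 0 1)) hC t,
          integral_sub (hrφ.const_mul 2) (hφ''.intervalIntegrable 0 1),
          intervalIntegral.integral_const_mul, hr0, hφ''0]
        ring

theorem integral_sub_mul_eq_zero_of_isNeumannRayleighLowerBound {q : ℝ → ℝ} {lam : ℝ}
    (hq : IntervalIntegrable q volume 0 1) (h : IsNeumannRayleighLowerBound q lam)
    (hmean : ∫ x in (0:ℝ)..1, q x = lam) {φ : ℝ → ℝ} (hφ : ContDiff ℝ 2 φ)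
    (hφ0 : deriv φ 0 = 0) (hφ1 : deriv φ 1 = 0) :
    ∫ x in (0:ℝ)..1, (q x - lam) * φ x = 0 := by
  have hden : ∀ᶠ t in 𝓝 0, 0 < ∫ x in (0:ℝ)..1, (1 + t * φ x) ^ 2 := by
    have hcont : Continuous fun t : ℝ => ∫ x in (0:ℝ)..1, (1 + t * φ x) ^ 2 :=
      continuous_parametric_intervalIntegral_of_continuous' (by fun_prop) 0 1
    exact continuousAt_const.eventually_lt hcont.continuousAt (by simp)
  have hquad : ∀ᶠ t in 𝓝 0, 0 ≤ (2 * ∫ x in (0:ℝ)..1, (q x - lam) * φ x) * t +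
      (∫ x in (0:ℝ)..1, ((q x - lam) * φ x ^ 2 - φ x * deriv (deriv φ) x)) * t ^ 2 := by
    filter_upwards [hden] with t ht
    rw [← rayleighExcess_one_add_mul hq hmean hφ hφ0 hφ1]
    exact h.rayleighExcess_nonneg (contDiff_const.add (contDiff_const.mul hφ))
      (by simp [deriv_const_add', deriv_const_mul_field', hφ0])
      (by simp [deriv_const_add', deriv_const_mul_field', hφ1]) ht
  simpa using eq_zero_of_eventually_nonneg_mul_add_mul_sq hquad

theorem ae_eq_zero_on_Icc_of_intervalIntegral_mul_eq_zero {f : ℝ → ℝ} {a b : ℝ} (hab : a ≤ b)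
    (hf : IntegrableOn f (Icc a b))
    (h : ∀ φ : ℝ → ℝ, ContDiff ℝ ∞ φ → tsupport φ ⊆ Ioo a b → ∫ x in a..b, f x * φ x = 0) :
    ∀ᵐ x, x ∈ Icc a b → f x = 0 := by
  have hIoo : ∀ᵐ x, x ∈ Ioo a b → f x = 0 := by
    refine isOpen_Ioo.ae_eq_zero_of_integral_contDiff_smul_eq_zero
      (hf.mono_set Ioo_subset_Icc_self).locallyIntegrableOn fun φ hφ _ hsupp => ?_
    have hvanish : ∀ x ∉ Ioc a b, φ x • f x = 0 := fun x hx => by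
      rw [image_eq_zero_of_notMem_tsupport fun hx' => hx (Ioo_subset_Ioc_self (hsupp hx')),
        zero_smul]
    rw [← setIntegral_eq_integral_of_forall_compl_eq_zero hvanish, ← integral_of_le hab,
      ← h φ hφ hsupp]
    simp only [smul_eq_mul, mul_comm]
  filter_upwards [hIoo, (Ioo_ae_eq_Icc (a := a) (b := b) (μ := volume))] with x hx hxs hxI
  exact hx (hxs.mpr hxI)

theorem ambarzumyan_neumann_first_general (q : ℝ → ℝ)
    (hq : IntegrableOn q (Set.Icc (0:ℝ) 1))
    (lam0 : ℝ)
    (hvar : ∀ y : ℝ → ℂ, ContDiff ℝ 2 y → (∃ x ∈ Set.Icc (0:ℝ) 1, y x ≠ 0) →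
      NeumannBC y → lam0 ≤ rayleighQuotientR q y)
    (hge : lam0 ≥ ∫ x in (0:ℝ)..1, q x) :
    (∀ᵐ x, x ∈ Set.Icc (0:ℝ) 1 → q x = ∫ s in (0:ℝ)..1, q s) ∧
    lam0 = (∫ x in (0:ℝ)..1, q x) ∧
    IsNeumannEigenfunction q lam0 (fun _ : ℝ => (1 : ℂ)) := by
  have hle : lam0 ≤ ∫ x in (0:ℝ)..1, q x := by
    simpa [rayleighQuotientR_one] using
      hvar (fun _ => 1) contDiff_const ⟨0, by norm_num, one_ne_zero⟩ (by simp [NeumannBC])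
  have hmean : ∫ x in (0:ℝ)..1, q x = lam0 := le_antisymm hge hle
  have hconst : ∀ᵐ x, x ∈ Icc (0:ℝ) 1 → q x - lam0 = 0 :=
    ae_eq_zero_on_Icc_of_intervalIntegral_mul_eq_zero zero_le_one
      (hq.sub (integrableOn_const (by simp))) fun φ hφ hsupp =>
        integral_sub_mul_eq_zero_of_isNeumannRayleighLowerBound
          ((intervalIntegrable_iff_integrableOn_Icc_of_le zero_le_one).mpr hq) hvar hmean
          (hφ.of_le (by norm_cast))
          (deriv_of_notMem_tsupport fun h0 => (hsupp h0).1.false)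
          (deriv_of_notMem_tsupport fun h1 => (hsupp h1).2.false)
  have hq_eq : ∀ᵐ x, x ∈ Icc (0:ℝ) 1 → q x = lam0 := by
    filter_upwards [hconst] with x hx hxI
    exact sub_eq_zero.mp (hx hxI)
  exact ⟨by rwa [hmean], hmean.symm, isNeumannEigenfunction_one hq_eq⟩

/-- Theorem 5(a): if the first Neumann eigenvalue `λ₀` satisfies
`λ₀ ≥ ∫₀¹ q`, then `q` is a.e. its mean value; in particular `λ₀ = ∫₀¹ q` with the
constant function `1` as eigenfunction. -/
theorem ambarzumyan_neumann_first (q : ℝ → ℝ)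
    (hq : IntegrableOn q (Set.Icc (0:ℝ) 1))
    (lam0 : ℝ) (hfirst : IsFirstNeumannEigenvalue q lam0)
    (hvar : ∀ y : ℝ → ℂ, ContDiff ℝ 2 y → (∃ x ∈ Set.Icc (0:ℝ) 1, y x ≠ 0) →
      NeumannBC y → lam0 ≤ rayleighQuotientR q y)
    (hge : lam0 ≥ ∫ x in (0:ℝ)..1, q x) :
    (∀ᵐ x, x ∈ Set.Icc (0:ℝ) 1 → q x = ∫ s in (0:ℝ)..1, q s) ∧
    lam0 = (∫ x in (0:ℝ)..1, q x) ∧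
    IsNeumannEigenfunction q lam0 (fun _ : ℝ => (1 : ℂ)) :=
  ambarzumyan_neumann_first_general q hq lam0 hvar hge
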